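/- Let D be a metric on a finite set X and S = A|B a split of X such that D(a,b)+D(a',b') = D(a,b')+D(a',b) for all a,a' ∈ A and b,b' ∈ B. Then for every b ∈ B and all a,a' ∈ A: D(a|B) + D(a'|B) − 2α_S ≥ D(a,a'), where α_S is the isolation index of S; equivalently, D(a,b) + D(a',b) − 2D(b|A) ≥ D(a,a'). -/

import Mathlib

/-!
On a finite set the minima defining `D(a|B)` and `D(a'|B)` are attained, at pairs `b₁ b₂` and
`b₃ b₄` of `B`. The four-point identity makes the maximum in `α_S` equal to its first entry, so
`2α_S ≤ D(a,b₁) + D(a',b₂) - D(a,a') - D(b₁,b₂)`, and likewise for `b₃ b₄`; adding the two and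
exchanging `b₂` and `b₃` by the identity once more gives the first inequality. The second is the
pair `a, a'` as a candidate in the minimum defining `D(b|A)`.
-/

open Classical

variable {X : Type*}

/-- `D` is a metric on `X`. -/
def IsMetric (D : X → X → ℝ) : Prop :=
  (∀ x, D x x = 0) ∧ (∀ x y, D x y = D y x) ∧
  (∀ x y z, D x z ≤ D x y + D y z) ∧ (∀ x y, x ≠ y → 0 < D x y)

/-- `f ∈ P(D)`. -/
def memP (D : X → X → ℝ) (f : X → ℝ) : Prop := ∀ x y, D x y ≤ f x + f y

/-- The virtual distance `D(f|Y) = (1/2) min {f y + f y' - D y y' : y, y' ∈ Y}`. -/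
noncomputable def vdist (D : X → X → ℝ) (f : X → ℝ) (Y : Set X) : ℝ :=
  (1 / 2) * sInf {z | ∃ y ∈ Y, ∃ y' ∈ Y, z = f y + f y' - D y y'}

/-- `D(x|Y) := D(k_x|Y)` for the Kuratowski map `k_x`. -/
noncomputable def kdist (D : X → X → ℝ) (x : X) (Y : Set X) : ℝ :=
  vdist D (fun y => D x y) Y

/-- The isolation index `α_S` of the split `S = A|B`. -/
noncomputable def isoIdx (D : X → X → ℝ) (A B : Set X) : ℝ :=
  (1 / 2) * sInf {z | ∃ a ∈ A, ∃ a' ∈ A, ∃ b ∈ B, ∃ b' ∈ B,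
      z = max (D a b + D a' b') (D a b' + D a' b) - D a a' - D b b'}

/-- Adjacency in the graph `Γ_f`: vertices are points of the support of `f`,
and `x y` are joined iff `f x + f y > D x y`. -/
def adj (D : X → X → ℝ) (f : X → ℝ) (x y : X) : Prop :=
  x ≠ y ∧ f x ≠ 0 ∧ f y ≠ 0 ∧ D x y < f x + f y

/-- The graph `Γ_f` (on vertex set `supp f`) is disconnected. -/
def Disconn (D : X → X → ℝ) (f : X → ℝ) : Prop :=
  ∃ U V : Set X, U.Nonempty ∧ V.Nonempty ∧ Disjoint U V ∧
    U ∪ V = {x | f x ≠ 0} ∧ ∀ u ∈ U, ∀ v ∈ V, ¬ adj D f u v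

/-- `Γ_f` is the disjoint union of two cliques with vertex sets `A` and `B`. -/
def DisjUnionTwoCliques (D : X → X → ℝ) (f : X → ℝ) (A B : Set X) : Prop :=
  A.Nonempty ∧ B.Nonempty ∧ Disjoint A B ∧ A ∪ B = {x | f x ≠ 0} ∧
  (∀ a ∈ A, ∀ a' ∈ A, a ≠ a' → adj D f a a') ∧
  (∀ b ∈ B, ∀ b' ∈ B, b ≠ b' → adj D f b b') ∧
  (∀ a ∈ A, ∀ b ∈ B, ¬ adj D f a b)

/-- `A|B` is a block split of `X` relative to `D`. -/
def IsBlockSplit (D : X → X → ℝ) (A B : Set X) : Prop :=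
  ∃ f : X → ℝ, memP D f ∧ (∀ x, f x ≠ 0) ∧ DisjUnionTwoCliques D f A B

/-- `f` lies in the tight span `T(D)`:  `f x = max_y (D x y - f y)` for all `x`. -/
def memT (D : X → X → ℝ) (f : X → ℝ) : Prop :=
  ∀ x, IsGreatest (Set.range fun y => D x y - f y) (f x)

/-- The endpoint map `f_A = f_{A→α_S, B→0}` of the segment associated with a block split. -/
noncomputable def endpointA (D : X → X → ℝ) (A B : Set X) : X → ℝ :=
  fun x => if x ∈ A then kdist D x B - isoIdx D A B else kdist D x A

/-- The endpoint map `f_B = f_{A→0, B→α_S}` of the segment associated with a block split. -/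
noncomputable def endpointB (D : X → X → ℝ) (A B : Set X) : X → ℝ :=
  fun x => if x ∈ A then kdist D x B else kdist D x A - isoIdx D A B

/-- `A|B` is a split (bipartition into nonempty parts) of `X`. -/
def IsSplit (A B : Set X) : Prop :=
  A.Nonempty ∧ B.Nonempty ∧ Disjoint A B ∧ A ∪ B = Set.univ


section VirtualDistance

variable [Finite X] (D : X → X → ℝ)

theorem finite_setOf_exists_mem_mem_eq (g : X → X → ℝ) (Y : Set X) :
    {z | ∃ y ∈ Y, ∃ y' ∈ Y, z = g y y'}.Finite :=
  (Set.finite_range fun p : X × X => g p.1 p.2).subset <| by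
    rintro z ⟨y, -, y', -, rfl⟩
    exact ⟨(y, y'), rfl⟩

theorem two_mul_vdist_le (f : X → ℝ) {Y : Set X} {y y' : X} (hy : y ∈ Y) (hy' : y' ∈ Y) :
    2 * vdist D f Y ≤ f y + f y' - D y y' := by
  have h := csInf_le (finite_setOf_exists_mem_mem_eq (fun y y' => f y + f y' - D y y') Y).bddBelow
    ⟨y, hy, y', hy', rfl⟩
  rw [vdist]
  linarith

theorem exists_two_mul_vdist_eq (f : X → ℝ) {Y : Set X} (hY : Y.Nonempty) :
    ∃ y ∈ Y, ∃ y' ∈ Y, 2 * vdist D f Y = f y + f y' - D y y' := by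
  obtain ⟨y, hy⟩ := hY
  obtain ⟨y, hy, y', hy', h⟩ := Set.Nonempty.csInf_mem
    (s := {z | ∃ y ∈ Y, ∃ y' ∈ Y, z = f y + f y' - D y y'}) ⟨_, y, hy, y, hy, rfl⟩
    (finite_setOf_exists_mem_mem_eq (fun y y' => f y + f y' - D y y') Y)
  exact ⟨y, hy, y', hy', by rw [vdist, h]; ring⟩

end VirtualDistance

section IsolationIndex

variable [Finite X] {D : X → X → ℝ} {A B : Set X} {a a' b b' : X}

theorem two_mul_isoIdx_le (ha : a ∈ A) (ha' : a' ∈ A) (hb : b ∈ B) (hb' : b' ∈ B) :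
    2 * isoIdx D A B ≤ max (D a b + D a' b') (D a b' + D a' b) - D a a' - D b b' := by
  have hfin : {z | ∃ a ∈ A, ∃ a' ∈ A, ∃ b ∈ B, ∃ b' ∈ B,
      z = max (D a b + D a' b') (D a b' + D a' b) - D a a' - D b b'}.Finite :=
    (Set.finite_range fun p : X × X × X × X =>
      max (D p.1 p.2.2.1 + D p.2.1 p.2.2.2) (D p.1 p.2.2.2 + D p.2.1 p.2.2.1)
        - D p.1 p.2.1 - D p.2.2.1 p.2.2.2).subset <| by
      rintro z ⟨a, -, a', -, b, -, b', -, rfl⟩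
      exact ⟨(a, a', b, b'), rfl⟩
  have h := csInf_le hfin.bddBelow ⟨a, ha, a', ha', b, hb, b', hb', rfl⟩
  rw [isoIdx]
  linarith

theorem two_mul_isoIdx_le_of_add_eq_add (ha : a ∈ A) (ha' : a' ∈ A) (hb : b ∈ B) (hb' : b' ∈ B)
    (h4 : D a b + D a' b' = D a b' + D a' b) :
    2 * isoIdx D A B ≤ D a b + D a' b' - D a a' - D b b' := by
  simpa only [max_eq_left h4.ge] using two_mul_isoIdx_le (D := D) ha ha' hb hb'

end IsolationIndex

theorem stmt19_general [Fintype X] (D : X → X → ℝ) (hD : IsMetric D) (A B : Set X)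
    (h4 : ∀ a ∈ A, ∀ a' ∈ A, ∀ b ∈ B, ∀ b' ∈ B, D a b + D a' b' = D a b' + D a' b) :
    ∀ b ∈ B, ∀ a ∈ A, ∀ a' ∈ A,
      D a a' ≤ kdist D a B + kdist D a' B - 2 * isoIdx D A B ∧
      D a a' ≤ D a b + D a' b - 2 * kdist D b A := by
  intro b hb a ha a' ha'
  unfold kdist
  obtain ⟨b₁, hb₁, b₂, hb₂, hka⟩ := exists_two_mul_vdist_eq D (fun y => D a y) ⟨b, hb⟩
  obtain ⟨b₃, hb₃, b₄, hb₄, hka'⟩ := exists_two_mul_vdist_eq D (fun y => D a' y) ⟨b, hb⟩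
  have hα₁₂ := two_mul_isoIdx_le_of_add_eq_add ha ha' hb₁ hb₂ (h4 a ha a' ha' b₁ hb₁ b₂ hb₂)
  have hα₃₄ := two_mul_isoIdx_le_of_add_eq_add ha ha' hb₃ hb₄ (h4 a ha a' ha' b₃ hb₃ b₄ hb₄)
  have hcross := h4 a ha a' ha' b₃ hb₃ b₂ hb₂
  constructor
  · linarith
  · linarith [two_mul_vdist_le D (fun y => D b y) ha ha', hD.2.1 b a, hD.2.1 b a']

theorem stmt19 [Fintype X] (D : X → X → ℝ) (hD : IsMetric D) (A B : Set X)
    (hS : IsSplit A B)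
    (h4 : ∀ a ∈ A, ∀ a' ∈ A, ∀ b ∈ B, ∀ b' ∈ B, D a b + D a' b' = D a b' + D a' b) :
    ∀ b ∈ B, ∀ a ∈ A, ∀ a' ∈ A,
      D a a' ≤ kdist D a B + kdist D a' B - 2 * isoIdx D A B ∧
      D a a' ≤ D a b + D a' b - 2 * kdist D b A :=
  stmt19_general D hD A B h4
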